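/- Let f : Γ_+ → ℝ be smooth, symmetric, positive, and 1-homogeneous. Then f is inverse concave (i.e. f_* is concave on Γ_+) if and only if for every κ ∈ Γ_+ the symmetric n×n matrix with entries (∂²f/∂κ_k∂κ_l)(κ) + 2·((∂f/∂κ_k)(κ)/κ_k)·δ_{kl} is positive semidefinite. -/

import Mathlib

open Finset

/-- The positive cone `Γ₊ = {κ ∈ ℝⁿ : κᵢ > 0 for all i}`. -/
def PosCone (n : ℕ) : Set (Fin n → ℝ) := {κ | ∀ i, 0 < κ i}

/-- The first partial derivative `∂f/∂κ_k` at `x`. -/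
noncomputable def pd1 {n : ℕ} (f : (Fin n → ℝ) → ℝ) (k : Fin n) (x : Fin n → ℝ) : ℝ :=
  fderiv ℝ f x (Pi.single k 1)

/-- The second partial derivative `∂²f/∂κ_k∂κ_l` at `x`. -/
noncomputable def pd2 {n : ℕ} (f : (Fin n → ℝ) → ℝ) (k l : Fin n) (x : Fin n → ℝ) : ℝ :=
  fderiv ℝ (fun y => fderiv ℝ f y (Pi.single k 1)) x (Pi.single l 1)

/-- The dual function `f_*(τ) = f(τ₁⁻¹, …, τₙ⁻¹)⁻¹`. -/
noncomputable def dualF {n : ℕ} (f : (Fin n → ℝ) → ℝ) (τ : Fin n → ℝ) : ℝ :=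
  (f (fun i => (τ i)⁻¹))⁻¹

/-!
Restricted to lines, concavity of `f_*` is a sign condition on second derivatives. Along the line
`τ + t v`, with `κ = τ⁻¹` and `z = v / τ²`, one computes
`(f_*)'' = (2 (∇f(κ) ⬝ z)² - f(κ) Q(z)) / f(κ)³`, where `Q` is the quadratic form of the matrix in
the theorem. Hence `f_*` is concave iff `2 (∇f ⬝ z)² ≤ f Q(z)` for all `κ` and `z`, which trivially
gives `Q ≥ 0`. Conversely, Euler's relations `∇f(κ) ⬝ κ = f(κ)` and `D²f(κ) κ = 0` for the
1-homogeneous `f` give `f Q(z - c κ) = f Q(z) - 2 (∇f ⬝ z)²` for `c = (∇f ⬝ z) / f`.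
-/

open Filter Topology Set Matrix

lemma posCone_eq_pi (n : ℕ) : PosCone n = Set.univ.pi fun _ => Ioi (0 : ℝ) := by
  ext κ
  simp [PosCone]

lemma isOpen_posCone (n : ℕ) : IsOpen (PosCone n) := by
  rw [posCone_eq_pi]
  exact isOpen_set_pi finite_univ fun _ _ => isOpen_Ioi

lemma convex_posCone (n : ℕ) : Convex ℝ (PosCone n) := by
  rw [posCone_eq_pi]
  exact convex_pi fun _ _ => convex_Ioi 0

lemma inv_mem_posCone {n : ℕ} {κ : Fin n → ℝ} (hκ : κ ∈ PosCone n) : κ⁻¹ ∈ PosCone n :=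
  fun i => inv_pos.2 (hκ i)

section Concavity

lemma concaveOn_iff_deriv2_nonpos {I : Set ℝ} (hIo : IsOpen I) (hIc : Convex ℝ I) {φ : ℝ → ℝ}
    (hφ2 : ContDiffOn ℝ 2 φ I) : ConcaveOn ℝ I φ ↔ ∀ t ∈ I, deriv^[2] φ t ≤ 0 := by
  have hφ : DifferentiableOn ℝ φ I := hφ2.differentiableOn two_ne_zero
  have hφ' : DifferentiableOn ℝ (deriv φ) I :=
    (hφ2.deriv_of_isOpen hIo (m := 1) (by norm_num)).differentiableOn one_ne_zero
  refine ⟨fun hconc t ht => ?_, concaveOn_of_deriv2_nonpos' hIc hφ hφ'⟩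
  have hanti := hconc.antitoneOn_deriv fun s hs => hφ.differentiableAt (hIo.mem_nhds hs)
  have hacc : AccPt t (𝓟 I) := by
    simpa using (PerfectSpace.univ_preperfect t (mem_univ t)).nhds_inter (hIo.mem_nhds ht)
  exact ((hφ' t ht).differentiableAt (hIo.mem_nhds ht)).hasDerivAt.hasDerivWithinAt
    |>.nonpos_of_antitoneOn hacc hanti

variable {E : Type*} [NormedAddCommGroup E] [NormedSpace ℝ E] {s : Set E} {g : E → ℝ}

lemma add_smul_eq_lineMap (x v : E) : (fun t : ℝ => x + t • v) = AffineMap.lineMap x (x + v) := by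
  ext t
  simp [AffineMap.lineMap_apply_module', add_comm]

lemma concaveOn_iff_forall_concaveOn_line (hs : Convex ℝ s) :
    ConcaveOn ℝ s g ↔
      ∀ x ∈ s, ∀ v : E, ConcaveOn ℝ {t : ℝ | x + t • v ∈ s} fun t => g (x + t • v) := by
  refine ⟨fun hconc x _ v => ?_, fun hlines => ⟨hs, fun x hx y hy a b ha hb hab => ?_⟩⟩
  · have h := hconc.comp_affineMap (AffineMap.lineMap x (x + v))
    rwa [← add_smul_eq_lineMap] at h
  · have h := (hlines x hx (y - x)).2 (x := 0) (y := 1) (by simpa using hx) (by simpa using hy)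
      ha hb hab
    have hcomb : x + (a • (0 : ℝ) + b • 1) • (y - x) = a • x + b • y := by
      rw [eq_sub_of_add_eq hab]
      simp only [smul_eq_mul, mul_zero, zero_add, mul_one]
      module
    simp only [hcomb] at h
    simpa using h

lemma deriv2_line_eq (x v : E) (t : ℝ) :
    deriv^[2] (fun u : ℝ => g (x + u • v)) t =
      deriv^[2] (fun u : ℝ => g (x + t • v + u • v)) 0 := by
  have hshift : (fun u : ℝ => g (x + t • v + u • v)) = fun u => g (x + (t + u) • v) := by
    simp only [add_smul, add_assoc]
  rw [hshift]
  change deriv (deriv fun u : ℝ => g (x + u • v)) t =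
    deriv (deriv fun u : ℝ => g (x + (t + u) • v)) 0
  rw [funext (deriv_comp_const_add (fun u => g (x + u • v)) t), deriv_comp_const_add, add_zero]

lemma concaveOn_iff_deriv2_line_nonpos (hso : IsOpen s) (hsc : Convex ℝ s)
    (hg : ContDiffOn ℝ 2 g s) :
    ConcaveOn ℝ s g ↔ ∀ x ∈ s, ∀ v : E, deriv^[2] (fun t : ℝ => g (x + t • v)) 0 ≤ 0 := by
  have hI : ∀ x v : E, IsOpen {t : ℝ | x + t • v ∈ s} ∧ Convex ℝ {t : ℝ | x + t • v ∈ s} ∧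
      ContDiffOn ℝ 2 (fun t => g (x + t • v)) {t : ℝ | x + t • v ∈ s} := by
    intro x v
    refine ⟨hso.preimage (by fun_prop), ?_, hg.comp (by fun_prop) fun _ ht => ht⟩
    have h := hsc.affine_preimage (AffineMap.lineMap x (x + v))
    rwa [← add_smul_eq_lineMap] at h
  rw [concaveOn_iff_forall_concaveOn_line hsc]
  refine ⟨fun h x hx v => ?_, fun h x hx v => ?_⟩
  · obtain ⟨hIo, hIc, hφ⟩ := hI x v
    exact (concaveOn_iff_deriv2_nonpos hIo hIc hφ).1 (h x hx v) 0 (by simpa using hx)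
  · obtain ⟨hIo, hIc, hφ⟩ := hI x v
    refine (concaveOn_iff_deriv2_nonpos hIo hIc hφ).2 fun t ht => ?_
    rw [deriv2_line_eq]
    exact h _ ht v

end Concavity

section PartialDerivatives

variable {n : ℕ}

noncomputable def partialGrad (f : (Fin n → ℝ) → ℝ) (x : Fin n → ℝ) : Fin n → ℝ :=
  fun k => pd1 f k x

noncomputable def partialHess (f : (Fin n → ℝ) → ℝ) (x : Fin n → ℝ) : Matrix (Fin n) (Fin n) ℝ :=
  Matrix.of fun k l => pd2 f k l x

lemma fderiv_apply_eq_sum_pd1 (f : (Fin n → ℝ) → ℝ) (x w : Fin n → ℝ) :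
    fderiv ℝ f x w = ∑ k, w k * pd1 f k x := by
  refine ((fderiv ℝ f x).toLinearMap.pi_apply_eq_sum_univ w).trans
    (Finset.sum_congr rfl fun k _ => ?_)
  have hsingle : (fun j => if k = j then (1 : ℝ) else 0) = Pi.single k 1 := by
    ext j
    simp [Pi.single_apply, eq_comm]
  rw [smul_eq_mul, hsingle, pd1]
  rfl

lemma pd1_pd1 (f : (Fin n → ℝ) → ℝ) (k l : Fin n) : pd1 (pd1 f k) l = pd2 f k l := rfl

variable {f : (Fin n → ℝ) → ℝ} {x : Fin n → ℝ}

lemma hasDerivAt_comp_eq_sum_pd1 {γ : ℝ → Fin n → ℝ} {γ' : Fin n → ℝ} {t : ℝ}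
    (hf : DifferentiableAt ℝ f (γ t)) (hγ : HasDerivAt γ γ' t) :
    HasDerivAt (fun s => f (γ s)) (∑ k, γ' k * pd1 f k (γ t)) t := by
  rw [← fderiv_apply_eq_sum_pd1]
  exact hf.hasFDerivAt.comp_hasDerivAt t hγ

lemma ContDiffAt.differentiableAt_pd1 (hf : ContDiffAt ℝ 2 f x) (k : Fin n) :
    DifferentiableAt ℝ (pd1 f k) x :=
  ((hf.fderiv_right (m := 1) le_rfl).differentiableAt one_ne_zero).clm_apply
    (differentiableAt_const _)

lemma hasDerivAt_sum_mul_pd1_comp {γ γ' : ℝ → Fin n → ℝ} {γ'' : Fin n → ℝ} {t : ℝ}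
    (hf : ContDiffAt ℝ 2 f (γ t)) (hγ : HasDerivAt γ (γ' t) t) (hγ' : HasDerivAt γ' γ'' t) :
    HasDerivAt (fun s => ∑ k, γ' s k * pd1 f k (γ s))
      (∑ k, (γ'' k * pd1 f k (γ t) + γ' t k * ∑ l, γ' t l * pd2 f k l (γ t))) t :=
  HasDerivAt.fun_sum fun k _ =>
    (hasDerivAt_pi.1 hγ' k).fun_mul (hasDerivAt_comp_eq_sum_pd1 (hf.differentiableAt_pd1 k) hγ)

lemma ContDiffAt.partialHess_isSymm (hf : ContDiffAt ℝ 2 f x) : (partialHess f x).IsSymm := by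
  have hsymm := hf.isSymmSndFDerivAt (by simp [minSmoothness_of_isRCLikeNormedField])
  have hd : DifferentiableAt ℝ (fderiv ℝ f) x :=
    (hf.fderiv_right (m := 1) le_rfl).differentiableAt one_ne_zero
  have hpd2 : ∀ k l, pd2 f k l x = fderiv ℝ (fderiv ℝ f) x (Pi.single l 1) (Pi.single k 1) := by
    intro k l
    simp [pd2, fderiv_clm_apply hd (differentiableAt_const _)]
  ext k l
  simp only [partialHess, Matrix.transpose_apply, Matrix.of_apply, hpd2, hsymm.eq]

end PartialDerivatives

section Homogeneity

variable {E : Type*} [NormedAddCommGroup E] [NormedSpace ℝ E] {g : E → ℝ} {x : E}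

lemma fderiv_apply_self_of_homogeneous {p : ℕ} (hg : DifferentiableAt ℝ g x)
    (hhom : ∀ᶠ t in 𝓝 (1 : ℝ), g (t • x) = t ^ p * g x) : fderiv ℝ g x x = p * g x := by
  have hray : HasDerivAt (fun t : ℝ => g (t • x)) (fderiv ℝ g x x) 1 := by
    have hsmul : HasDerivAt (fun t : ℝ => t • x) x 1 := by
      simpa using (hasDerivAt_id (1 : ℝ)).smul_const x
    have hg1 : HasFDerivAt g (fderiv ℝ g x) ((1 : ℝ) • x) := by simpa using hg.hasFDerivAt
    exact hg1.comp_hasDerivAt 1 hsmul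
  have hpow : HasDerivAt (fun t : ℝ => t ^ p * g x) (p * g x) 1 := by
    simpa using (hasDerivAt_pow p (1 : ℝ)).mul_const (g x)
  exact hray.unique (hpow.congr_of_eventuallyEq hhom)

lemma fderiv_smul_eq_of_homogeneous {t : ℝ} (ht : t ≠ 0) (hgx : DifferentiableAt ℝ g x)
    (hgtx : DifferentiableAt ℝ g (t • x)) (hhom : ∀ᶠ y in 𝓝 x, g (t • y) = t * g y) :
    fderiv ℝ g (t • x) = fderiv ℝ g x := by
  have hcomp : HasFDerivAt (fun y => g (t • y))
      ((fderiv ℝ g (t • x)).comp (t • ContinuousLinearMap.id ℝ E)) x :=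
    hgtx.hasFDerivAt.comp x ((hasFDerivAt_id x).const_smul t)
  have hscaled : HasFDerivAt (fun y => t * g y) (t • fderiv ℝ g x) x :=
    hgx.hasFDerivAt.const_mul t
  have heq := hcomp.unique (hscaled.congr_of_eventuallyEq hhom)
  ext w
  have hw := congrArg (fun L : E →L[ℝ] ℝ => L w) heq
  simp only [ContinuousLinearMap.comp_apply, FunLike.coe_smul, Pi.smul_apply,
    ContinuousLinearMap.id_apply, map_smul, smul_eq_mul] at hw
  exact mul_left_cancel₀ ht hw

end Homogeneity

lemma deriv2_inv_eq {ψ ψ' : ℝ → ℝ} {t a : ℝ} (hψ : ∀ᶠ s in 𝓝 t, HasDerivAt ψ (ψ' s) s)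
    (hψ' : HasDerivAt ψ' a t) (h0 : ψ t ≠ 0) :
    deriv^[2] (fun s => (ψ s)⁻¹) t = (2 * ψ' t ^ 2 - ψ t * a) / ψ t ^ 3 := by
  have hne : ∀ᶠ s in 𝓝 t, ψ s ≠ 0 := hψ.self_of_nhds.continuousAt.eventually_ne h0
  have hderiv : deriv (fun s => (ψ s)⁻¹) =ᶠ[𝓝 t] fun s => -ψ' s / ψ s ^ 2 := by
    filter_upwards [hψ, hne] with s hs hs0
    exact (hs.inv hs0).deriv
  have h2 : HasDerivAt (fun s => -ψ' s / ψ s ^ 2) ((2 * ψ' t ^ 2 - ψ t * a) / ψ t ^ 3) t := by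
    refine (hψ'.fun_neg.fun_div (hψ.self_of_nhds.fun_pow 2) (pow_ne_zero 2 h0)).congr_deriv ?_
    field_simp
    ring
  change deriv (deriv fun s => (ψ s)⁻¹) t = _
  rw [hderiv.deriv_eq]
  exact h2.deriv

section InvConcavityForm

variable {n : ℕ} (H : Matrix (Fin n) (Fin n) ℝ) (p κ : Fin n → ℝ)

noncomputable def invConcavityForm (z : Fin n → ℝ) : ℝ :=
  z ⬝ᵥ H *ᵥ z + 2 * ∑ k, p k * z k ^ 2 / κ k

lemma sum_sum_eq_invConcavityForm (z : Fin n → ℝ) :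
    ∑ k, ∑ l, (H k l + 2 * (p k / κ k) * if k = l then 1 else 0) * z k * z l =
      invConcavityForm H p κ z := by
  simp only [invConcavityForm, dotProduct, mulVec, add_mul, mul_ite, mul_one, mul_zero, ite_mul,
    zero_mul, Finset.sum_add_distrib, Finset.sum_ite_eq, Finset.mem_univ, if_true,
    Finset.mul_sum]
  congr 1
  · exact Finset.sum_congr rfl fun k _ => Finset.sum_congr rfl fun l _ => by ring
  · exact Finset.sum_congr rfl fun k _ => by ring

variable {H p κ}

lemma invConcavityForm_sub_smul (hH : H.IsSymm) (hHκ : H *ᵥ κ = 0) (hκ : ∀ k, κ k ≠ 0)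
    (z : Fin n → ℝ) (c : ℝ) :
    invConcavityForm H p κ (z - c • κ) =
      invConcavityForm H p κ z - 4 * c * (p ⬝ᵥ z) + 2 * c ^ 2 * (p ⬝ᵥ κ) := by
  have hquad : (z - c • κ) ⬝ᵥ H *ᵥ (z - c • κ) = z ⬝ᵥ H *ᵥ z := by
    have hκH : κ ⬝ᵥ H *ᵥ z = 0 := by
      rw [dotProduct_mulVec, ← mulVec_transpose, hH.eq, hHκ, zero_dotProduct]
    rw [mulVec_sub, mulVec_smul, hHκ, smul_zero, sub_zero, sub_dotProduct, smul_dotProduct, hκH,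
      smul_zero, sub_zero]
  have hdiag : ∀ k, p k * (z - c • κ) k ^ 2 / κ k =
      p k * z k ^ 2 / κ k - 2 * c * (p k * z k) + c ^ 2 * (p k * κ k) := by
    intro k
    have := hκ k
    simp only [Pi.sub_apply, Pi.smul_apply, smul_eq_mul]
    field_simp
    ring
  rw [invConcavityForm, invConcavityForm, hquad]
  simp only [hdiag, Finset.sum_add_distrib, Finset.sum_sub_distrib,
    ← Finset.mul_sum, dotProduct]
  ring

lemma forall_le_mul_invConcavityForm_iff (hH : H.IsSymm) (hHκ : H *ᵥ κ = 0)
    (hκ : ∀ k, κ k ≠ 0) (hpκ : 0 < p ⬝ᵥ κ) :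
    (∀ z, 2 * (p ⬝ᵥ z) ^ 2 ≤ (p ⬝ᵥ κ) * invConcavityForm H p κ z) ↔
      ∀ z, 0 ≤ invConcavityForm H p κ z := by
  refine ⟨fun h z => ?_, fun h z => ?_⟩
  · exact nonneg_of_mul_nonneg_right ((by positivity : (0 : ℝ) ≤ 2 * (p ⬝ᵥ z) ^ 2).trans (h z)) hpκ
  · -- shifting `z` along the kernel direction `κ` removes the gradient component
    have hshift := invConcavityForm_sub_smul (p := p) hH hHκ hκ z ((p ⬝ᵥ z) / (p ⬝ᵥ κ))
    have hnonneg := h (z - ((p ⬝ᵥ z) / (p ⬝ᵥ κ)) • κ)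
    rw [hshift] at hnonneg
    have hexpand : (p ⬝ᵥ κ) * invConcavityForm H p κ z - 2 * (p ⬝ᵥ z) ^ 2 =
        (p ⬝ᵥ κ) * (invConcavityForm H p κ z - 4 * ((p ⬝ᵥ z) / (p ⬝ᵥ κ)) * (p ⬝ᵥ z) +
          2 * ((p ⬝ᵥ z) / (p ⬝ᵥ κ)) ^ 2 * (p ⬝ᵥ κ)) := by
      field_simp
      ring
    have := mul_nonneg hpκ.le hnonneg
    rw [← hexpand] at this
    linarith

end InvConcavityForm

section HomogeneousOnCone

variable {n : ℕ} {f : (Fin n → ℝ) → ℝ} {κ : Fin n → ℝ}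

lemma smul_mem_posCone {t : ℝ} (ht : 0 < t) (hκ : κ ∈ PosCone n) : t • κ ∈ PosCone n :=
  fun i => by simpa using mul_pos ht (hκ i)

lemma partialGrad_dotProduct_self (hf : DifferentiableAt ℝ f κ) (hκ : κ ∈ PosCone n)
    (hhom : ∀ t : ℝ, 0 < t → ∀ κ ∈ PosCone n, f (t • κ) = t * f κ) :
    partialGrad f κ ⬝ᵥ κ = f κ := by
  have heuler := fderiv_apply_self_of_homogeneous (p := 1) hf <| by
    filter_upwards [lt_mem_nhds one_pos] with t ht
    rw [pow_one, hhom t ht κ hκ]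
  rw [fderiv_apply_eq_sum_pd1, Nat.cast_one, one_mul] at heuler
  simpa only [partialGrad, dotProduct, mul_comm] using heuler

lemma partialHess_mulVec_self (hf : ContDiffOn ℝ 2 f (PosCone n)) (hκ : κ ∈ PosCone n)
    (hhom : ∀ t : ℝ, 0 < t → ∀ κ ∈ PosCone n, f (t • κ) = t * f κ) :
    partialHess f κ *ᵥ κ = 0 := by
  have hdiff : ∀ y ∈ PosCone n, DifferentiableAt ℝ f y := fun y hy =>
    (hf.contDiffAt ((isOpen_posCone n).mem_nhds hy)).differentiableAt two_ne_zero
  ext k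
  -- the partial derivatives of a 1-homogeneous function are 0-homogeneous
  have hpd1 : ∀ t : ℝ, 0 < t → pd1 f k (t • κ) = pd1 f k κ := by
    intro t ht
    have hfd := fderiv_smul_eq_of_homogeneous ht.ne' (hdiff κ hκ)
      (hdiff _ (smul_mem_posCone ht hκ)) <| by
        filter_upwards [(isOpen_posCone n).mem_nhds hκ] with y hy
        exact hhom t ht y hy
    simp only [pd1, hfd]
  have heuler := fderiv_apply_self_of_homogeneous (p := 0)
    ((hf.contDiffAt ((isOpen_posCone n).mem_nhds hκ)).differentiableAt_pd1 k) <| by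
      filter_upwards [lt_mem_nhds one_pos] with t ht
      rw [pow_zero, one_mul, hpd1 t ht]
  rw [fderiv_apply_eq_sum_pd1, Nat.cast_zero, zero_mul] at heuler
  simpa only [partialHess, Matrix.mulVec, dotProduct, Matrix.of_apply, pd1_pd1, mul_comm,
    Pi.zero_apply] using heuler

end HomogeneousOnCone

section Dual

variable {n : ℕ} {f : (Fin n → ℝ) → ℝ}

lemma hasDerivAt_inv_add_smul {τ v : Fin n → ℝ} {t : ℝ} (h : ∀ k, τ k + t * v k ≠ 0) :
    HasDerivAt (fun s : ℝ => (τ + s • v)⁻¹) (-(v * (τ + t • v)⁻¹ ^ 2)) t := by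
  refine hasDerivAt_pi.2 fun k => ?_
  refine ((((hasDerivAt_id t).mul_const (v k)).const_add (τ k)).inv (h k)).congr_deriv ?_
  simp [div_eq_mul_inv]

lemma contDiffOn_dualF (hf : ContDiffOn ℝ 2 f (PosCone n)) (hpos : ∀ κ ∈ PosCone n, 0 < f κ) :
    ContDiffOn ℝ 2 (dualF f) (PosCone n) := by
  have hinv : ContDiffOn ℝ 2 (fun τ : Fin n → ℝ => τ⁻¹) (PosCone n) :=
    contDiffOn_pi.2 fun i => (contDiff_apply ℝ ℝ i).contDiffOn.inv fun τ hτ => (hτ i).ne'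
  exact (hf.comp hinv fun τ hτ => inv_mem_posCone hτ).inv fun τ hτ =>
    (hpos _ (inv_mem_posCone hτ)).ne'

lemma deriv2_dualF_line (hf : ContDiffOn ℝ 2 f (PosCone n)) (hpos : ∀ κ ∈ PosCone n, 0 < f κ)
    {κ : Fin n → ℝ} (hκ : κ ∈ PosCone n) (z : Fin n → ℝ) :
    deriv^[2] (fun t : ℝ => dualF f (κ⁻¹ + t • (z / κ ^ 2))) 0 =
      (2 * (partialGrad f κ ⬝ᵥ z) ^ 2 -
        f κ * invConcavityForm (partialHess f κ) (partialGrad f κ) κ z) / f κ ^ 3 := by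
  set w := z / κ ^ 2
  set γ : ℝ → Fin n → ℝ := fun t => (κ⁻¹ + t • w)⁻¹
  have hκ0 : ∀ k, κ k ≠ 0 := fun k => (hκ k).ne'
  have hγ0 : γ 0 = κ := by simp [γ]
  have hz : w * κ ^ 2 = z := by
    ext k
    simp [w, hκ0 k]
  have hγ : ∀ᶠ t in 𝓝 (0 : ℝ), γ t ∈ PosCone n ∧ HasDerivAt γ (-(w * γ t ^ 2)) t := by
    have hcone : ∀ᶠ t in 𝓝 (0 : ℝ), κ⁻¹ + t • w ∈ PosCone n :=
      (by fun_prop : Continuous fun t : ℝ => κ⁻¹ + t • w).continuousAt.preimage_mem_nhds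
        ((isOpen_posCone n).mem_nhds (by simpa using inv_mem_posCone hκ))
    filter_upwards [hcone] with t ht
    exact ⟨inv_mem_posCone ht, hasDerivAt_inv_add_smul fun k => (ht k).ne'⟩
  have hC2 : ∀ t, γ t ∈ PosCone n → ContDiffAt ℝ 2 f (γ t) := fun t ht =>
    hf.contDiffAt ((isOpen_posCone n).mem_nhds ht)
  have hψ : ∀ᶠ t in 𝓝 (0 : ℝ),
      HasDerivAt (fun s => f (γ s)) (∑ k, (-(w * γ t ^ 2)) k * pd1 f k (γ t)) t := by
    filter_upwards [hγ] with t ⟨ht, hdt⟩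
    exact hasDerivAt_comp_eq_sum_pd1 ((hC2 t ht).differentiableAt two_ne_zero) hdt
  have hγ' : HasDerivAt (fun t => -(w * γ t ^ 2)) (2 * z ^ 2 / κ) 0 := by
    refine hasDerivAt_pi.2 fun k => ?_
    have hγk : HasDerivAt (fun t => γ t k) (-z k) 0 :=
      (hasDerivAt_pi.1 hγ.self_of_nhds.2 k).congr_deriv (by rw [hγ0, hz]; rfl)
    refine ((hγk.fun_pow 2).const_mul (w k)).fun_neg.congr_deriv ?_
    have := hκ0 k
    simp only [hγ0, w, Pi.div_apply, Pi.pow_apply, Pi.mul_apply, Pi.ofNat_apply]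
    field_simp
    ring
  have hψ' : HasDerivAt (fun t => ∑ k, (-(w * γ t ^ 2)) k * pd1 f k (γ t))
      (invConcavityForm (partialHess f κ) (partialGrad f κ) κ z) 0 := by
    refine (hasDerivAt_sum_mul_pd1_comp (hC2 0 hγ.self_of_nhds.1) hγ.self_of_nhds.2
      hγ').congr_deriv ?_
    simp only [invConcavityForm, hγ0, hz, Pi.neg_apply, Pi.div_apply, Pi.mul_apply,
      Pi.pow_apply, Pi.ofNat_apply, partialGrad, partialHess, dotProduct, mulVec,
      Matrix.of_apply, Finset.mul_sum, ← Finset.sum_add_distrib]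
    refine Finset.sum_congr rfl fun k _ => ?_
    rw [add_comm]
    congr 1
    · exact Finset.sum_congr rfl fun l _ => by ring
    · ring
  have hS : (∑ k, (-(w * γ 0 ^ 2)) k * pd1 f k (γ 0)) ^ 2 = (partialGrad f κ ⬝ᵥ z) ^ 2 := by
    simp [hγ0, hz, partialGrad, dotProduct, mul_comm]
  change deriv^[2] (fun t => (f (γ t))⁻¹) 0 = _
  rw [deriv2_inv_eq hψ hψ' (by rw [hγ0]; exact (hpos κ hκ).ne'), hS, hγ0]

lemma concaveOn_dualF_iff (hf : ContDiffOn ℝ 2 f (PosCone n))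
    (hpos : ∀ κ ∈ PosCone n, 0 < f κ) :
    ConcaveOn ℝ (PosCone n) (dualF f) ↔ ∀ κ ∈ PosCone n, ∀ z : Fin n → ℝ,
      2 * (partialGrad f κ ⬝ᵥ z) ^ 2 ≤
        f κ * invConcavityForm (partialHess f κ) (partialGrad f κ) κ z := by
  have hline : ∀ κ ∈ PosCone n, ∀ z : Fin n → ℝ,
      deriv^[2] (fun t : ℝ => dualF f (κ⁻¹ + t • (z / κ ^ 2))) 0 ≤ 0 ↔
        2 * (partialGrad f κ ⬝ᵥ z) ^ 2 ≤
          f κ * invConcavityForm (partialHess f κ) (partialGrad f κ) κ z := by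
    intro κ hκ z
    have := hpos κ hκ
    rw [deriv2_dualF_line hf hpos hκ z, div_le_iff₀ (by positivity), zero_mul, sub_nonpos]
  rw [concaveOn_iff_deriv2_line_nonpos (isOpen_posCone n) (convex_posCone n)
    (contDiffOn_dualF hf hpos)]
  refine ⟨fun h κ hκ z => (hline κ hκ z).1 (h _ (inv_mem_posCone hκ) _), fun h τ hτ v => ?_⟩
  -- every line through `τ` is a line through `κ⁻¹` with `κ = τ⁻¹`
  have hv : v / τ ^ 2 / τ⁻¹ ^ 2 = v := by
    ext k
    have := (hτ k).ne'
    simp only [Pi.div_apply, Pi.pow_apply, Pi.inv_apply]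
    field_simp
  have := (hline τ⁻¹ (inv_mem_posCone hτ) (v / τ ^ 2)).2 (h _ (inv_mem_posCone hτ) _)
  rwa [inv_inv, hv] at this

end Dual

theorem inverse_concave_iff_matrix_general (n : ℕ) (f : (Fin n → ℝ) → ℝ)
    (hsmooth : ContDiffOn ℝ (⊤ : ℕ∞) f (PosCone n))
    (hpos : ∀ κ ∈ PosCone n, 0 < f κ)
    (hhom : ∀ t : ℝ, 0 < t → ∀ κ ∈ PosCone n, f (t • κ) = t * f κ) :
    ConcaveOn ℝ (PosCone n) (dualF f) ↔
      ∀ κ ∈ PosCone n, ∀ z : Fin n → ℝ,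
        0 ≤ ∑ k : Fin n, ∑ l : Fin n,
          (pd2 f k l κ + 2 * (pd1 f k κ / κ k) * (if k = l then 1 else 0)) * z k * z l := by
  have hf : ContDiffOn ℝ 2 f (PosCone n) := hsmooth.of_le (WithTop.coe_le_coe.2 le_top)
  rw [concaveOn_dualF_iff hf hpos]
  refine forall₂_congr fun κ hκ => ?_
  have hfκ : ContDiffAt ℝ 2 f κ := hf.contDiffAt ((isOpen_posCone n).mem_nhds hκ)
  have hgrad := partialGrad_dotProduct_self (hfκ.differentiableAt two_ne_zero) hκ hhom
  have hsum : ∀ z : Fin n → ℝ, ∑ k : Fin n, ∑ l : Fin n,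
      (pd2 f k l κ + 2 * (pd1 f k κ / κ k) * (if k = l then 1 else 0)) * z k * z l =
        invConcavityForm (partialHess f κ) (partialGrad f κ) κ z :=
    sum_sum_eq_invConcavityForm _ _ _
  simp only [hsum, ← hgrad]
  exact forall_le_mul_invConcavityForm_iff hfκ.partialHess_isSymm
    (partialHess_mulVec_self hf hκ hhom) (fun k => (hκ k).ne') (hgrad ▸ hpos κ hκ)

/-- For `f` smooth, symmetric, positive and 1-homogeneous on `Γ₊`, `f` is inverse
concave (i.e. `f_*` is concave on `Γ₊`) iff the matrix
`(∂²f/∂κ_k∂κ_l) + 2 (∂f/∂κ_k / κ_k) δ_{kl}` is positive semidefinite at every `κ ∈ Γ₊`. -/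
theorem inverse_concave_iff_matrix (n : ℕ) (f : (Fin n → ℝ) → ℝ)
    (hsmooth : ContDiffOn ℝ (⊤ : ℕ∞) f (PosCone n))
    (hsym : ∀ σ : Equiv.Perm (Fin n), ∀ κ ∈ PosCone n, f (κ ∘ σ) = f κ)
    (hpos : ∀ κ ∈ PosCone n, 0 < f κ)
    (hhom : ∀ t : ℝ, 0 < t → ∀ κ ∈ PosCone n, f (t • κ) = t * f κ) :
    ConcaveOn ℝ (PosCone n) (dualF f) ↔
      ∀ κ ∈ PosCone n, ∀ z : Fin n → ℝ,
        0 ≤ ∑ k : Fin n, ∑ l : Fin n,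
          (pd2 f k l κ + 2 * (pd1 f k κ / κ k) * (if k = l then 1 else 0)) * z k * z l :=
  inverse_concave_iff_matrix_general n f hsmooth hpos hhom
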